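/- With the definitions of level-n candidate and actual errors (conditions (i)–(iv)), every actual level-n error fits inside a space-time box of size min{Q, 7(a+2)}·Q^{n-1} × min{Q, 7(a+2)}·Q^{n-1} × min{U, 7(b+2)}·U^{n-1}. -/
import Mathlib


/-- The space-time box `[x,x+l) × [y,y+m) × [t,t+n)` in `ℤ³`. -/
def stBox (l m n x y t : ℤ) : Set (ℤ × ℤ × ℤ) :=
  {p | x ≤ p.1 ∧ p.1 < x + l ∧ y ≤ p.2.1 ∧ p.2.1 < y + m ∧ t ≤ p.2.2 ∧ p.2.2 < t + n}

/-- Two sets of space-time points are `(l,m,n)`-linked if some box of size `l × m × n`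
contains a point of each. -/
def Linked (l m n : ℤ) (A B : Set (ℤ × ℤ × ℤ)) : Prop :=
  ∃ x y t : ℤ, (stBox l m n x y t ∩ A).Nonempty ∧ (stBox l m n x y t ∩ B).Nonempty

/-- `(l,m,n)`-separated = not `(l,m,n)`-linked. -/
def Separated (l m n : ℤ) (A B : Set (ℤ × ℤ × ℤ)) : Prop := ¬ Linked l m n A B

/-- `S` fits in a box of size `l × m × n`. -/
def FitsIn (l m n : ℤ) (S : Set (ℤ × ℤ × ℤ)) : Prop :=
  ∃ x y t : ℤ, S ⊆ stBox l m n x y t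

/-- For an error set `𝓔 ⊆ ℤ³` and parameters `Q, U, a, b`, the triple consisting of the
predicates "is a level-`n` candidate error", "is a level-`n` actual error", and the
level-`n` noise set, defined inductively following conditions (i)–(iv):
a level-`(k+1)` candidate is a nonempty subset of `𝓔` minus the level-`k` noise, fitting
in a `Q^{k+1} × Q^{k+1} × U^{k+1}` box, containing two disjoint level-`k` candidates
that are `(aQ^k, aQ^k, bU^k)`-linked; a level-`(k+1)` actual error is a candidate
containing no two `(4(a+2)Q^k, 4(a+2)Q^k, 4(b+2)U^k)`-separated level-`(k+1)` candidates
and which is `(aQ^{k+1}, aQ^{k+1}, bU^{k+1})`-separated from the remaining errors. -/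
def levelData (𝓔 : Set (ℤ × ℤ × ℤ)) (Q U a b : ℤ) :
    ℕ → (Set (ℤ × ℤ × ℤ) → Prop) × (Set (ℤ × ℤ × ℤ) → Prop) × Set (ℤ × ℤ × ℤ)
  | 0 =>
    let cand : Set (ℤ × ℤ × ℤ) → Prop := fun S => S.Nonempty ∧ S ⊆ 𝓔 ∧ FitsIn 2 2 1 S
    let act : Set (ℤ × ℤ × ℤ) → Prop := fun S => cand S ∧ Separated a a b S (𝓔 \ S)
    (cand, act, ⋃₀ {S | act S})
  | (k + 1) =>
    let prev := levelData 𝓔 Q U a b k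
    let candp := prev.1
    let noisep := prev.2.2
    let cand : Set (ℤ × ℤ × ℤ) → Prop := fun S =>
      S.Nonempty ∧ S ⊆ 𝓔 \ noisep ∧
      FitsIn (Q ^ (k + 1)) (Q ^ (k + 1)) (U ^ (k + 1)) S ∧
      ∃ S₁ S₂, candp S₁ ∧ candp S₂ ∧ S₁ ⊆ S ∧ S₂ ⊆ S ∧ Disjoint S₁ S₂ ∧
        Linked (a * Q ^ k) (a * Q ^ k) (b * U ^ k) S₁ S₂
    let act : Set (ℤ × ℤ × ℤ) → Prop := fun S =>
      cand S ∧
      (¬ ∃ S₁ S₂, cand S₁ ∧ cand S₂ ∧ S₁ ⊆ S ∧ S₂ ⊆ S ∧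
        Separated (4 * (a + 2) * Q ^ k) (4 * (a + 2) * Q ^ k) (4 * (b + 2) * U ^ k) S₁ S₂) ∧
      Separated (a * Q ^ (k + 1)) (a * Q ^ (k + 1)) (b * U ^ (k + 1)) S (𝓔 \ (S ∪ noisep))
    (cand, act, noisep ∪ ⋃₀ {S | act S})

namespace Stmt10Aux

open Set

abbrev Pt := ℤ × ℤ × ℤ

/-- componentwise closeness -/
def Close (l m n : ℤ) (u v : Pt) : Prop :=
  |u.1 - v.1| < l ∧ |u.2.1 - v.2.1| < m ∧ |u.2.2 - v.2.2| < n

lemma close_symm {l m n : ℤ} {u v : Pt} (h : Close l m n u v) : Close l m n v u := by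
  obtain ⟨h1, h2, h3⟩ := h
  refine ⟨?_, ?_, ?_⟩ <;> rw [abs_sub_comm] <;> assumption

private lemma interval_helper {x y l : ℤ} (h : |x - y| < l) :
    min x y ≤ x ∧ x < min x y + l ∧ min x y ≤ y ∧ y < min x y + l := by
  rw [abs_lt] at h
  rcases le_total x y with h' | h'
  · rw [min_eq_left h']; omega
  · rw [min_eq_right h']; omega

lemma linked_of_close {l m n : ℤ} {A B : Set Pt} {u v : Pt}
    (hu : u ∈ A) (hv : v ∈ B) (h : Close l m n u v) : Linked l m n A B := by
  obtain ⟨h1, h2, h3⟩ := h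
  obtain ⟨a1, a2, a3, a4⟩ := interval_helper h1
  obtain ⟨b1, b2, b3, b4⟩ := interval_helper h2
  obtain ⟨c1, c2, c3, c4⟩ := interval_helper h3
  exact ⟨min u.1 v.1, min u.2.1 v.2.1, min u.2.2 v.2.2,
    ⟨u, ⟨a1, a2, b1, b2, c1, c2⟩, hu⟩, ⟨v, ⟨a3, a4, b3, b4, c3, c4⟩, hv⟩⟩

lemma close_of_linked {l m n : ℤ} {A B : Set Pt} (h : Linked l m n A B) :
    ∃ u ∈ A, ∃ v ∈ B, Close l m n u v := by
  obtain ⟨x, y, t, ⟨u, hu1, hu2⟩, ⟨v, hv1, hv2⟩⟩ := h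
  obtain ⟨a1, a2, b1, b2, c1, c2⟩ := hu1
  obtain ⟨a3, a4, b3, b4, c3, c4⟩ := hv1
  exact ⟨u, hu2, v, hv2, by rw [abs_lt]; omega, by rw [abs_lt]; omega, by rw [abs_lt]; omega⟩

/-- pairwise coordinate bounds -/
def Bdd (ex et : ℤ) (C : Set Pt) : Prop :=
  ∀ u ∈ C, ∀ v ∈ C, |u.1 - v.1| ≤ ex ∧ |u.2.1 - v.2.1| ≤ ex ∧ |u.2.2 - v.2.2| ≤ et

lemma bdd_mono {ex et ex' et' : ℤ} {C C' : Set Pt} (h : Bdd ex et C)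
    (hC : C' ⊆ C) (h1 : ex ≤ ex') (h2 : et ≤ et') : Bdd ex' et' C' := by
  intro u hu v hv
  obtain ⟨g1, g2, g3⟩ := h u (hC hu) v (hC hv)
  exact ⟨le_trans g1 h1, le_trans g2 h1, le_trans g3 h2⟩

lemma fitsIn_mono {l m n l' m' n' : ℤ} {C : Set Pt} (h : FitsIn l m n C)
    (h1 : l ≤ l') (h2 : m ≤ m') (h3 : n ≤ n') : FitsIn l' m' n' C := by
  obtain ⟨x, y, t, hb⟩ := h
  exact ⟨x, y, t, fun p hp => by obtain ⟨e1, e2, e3, e4, e5, e6⟩ := hb hp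
                                 exact ⟨e1, by omega, e3, by omega, e5, by omega⟩⟩

lemma fitsIn_of_bdd {ex et : ℤ} {C : Set Pt} (hne : C.Nonempty) (h : Bdd ex et C) :
    FitsIn (ex + 1) (ex + 1) (et + 1) C := by
  classical
  obtain ⟨p0, hp0⟩ := hne
  have H1 : ∃ lb : ℤ, (∃ c ∈ C, c.1 = lb) ∧ ∀ z : ℤ, (∃ c ∈ C, c.1 = z) → lb ≤ z := by
    refine Int.exists_least_of_bdd ⟨p0.1 - ex, ?_⟩ ⟨p0.1, p0, hp0, rfl⟩
    rintro z ⟨c, hc, rfl⟩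
    have := (h p0 hp0 c hc).1
    rw [abs_le] at this; omega
  have H2 : ∃ lb : ℤ, (∃ c ∈ C, c.2.1 = lb) ∧ ∀ z : ℤ, (∃ c ∈ C, c.2.1 = z) → lb ≤ z := by
    refine Int.exists_least_of_bdd ⟨p0.2.1 - ex, ?_⟩ ⟨p0.2.1, p0, hp0, rfl⟩
    rintro z ⟨c, hc, rfl⟩
    have := (h p0 hp0 c hc).2.1
    rw [abs_le] at this; omega
  have H3 : ∃ lb : ℤ, (∃ c ∈ C, c.2.2 = lb) ∧ ∀ z : ℤ, (∃ c ∈ C, c.2.2 = z) → lb ≤ z := by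
    refine Int.exists_least_of_bdd ⟨p0.2.2 - et, ?_⟩ ⟨p0.2.2, p0, hp0, rfl⟩
    rintro z ⟨c, hc, rfl⟩
    have := (h p0 hp0 c hc).2.2
    rw [abs_le] at this; omega
  obtain ⟨x0, ⟨c1, hc1, hc1'⟩, hx0⟩ := H1
  obtain ⟨y0, ⟨c2, hc2, hc2'⟩, hy0⟩ := H2
  obtain ⟨t0, ⟨c3, hc3, hc3'⟩, ht0⟩ := H3
  refine ⟨x0, y0, t0, fun q hq => ?_⟩
  have b1 := hx0 q.1 ⟨q, hq, rfl⟩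
  have b2 := hy0 q.2.1 ⟨q, hq, rfl⟩
  have b3 := ht0 q.2.2 ⟨q, hq, rfl⟩
  have d1 := (h q hq c1 hc1).1
  have d2 := (h q hq c2 hc2).2.1
  have d3 := (h q hq c3 hc3).2.2
  rw [abs_le] at d1 d2 d3
  exact ⟨b1, by omega, b2, by omega, b3, by omega⟩

end Stmt10Aux
namespace Stmt10Aux

open Set

section Level

variable (𝓔 : Set Pt) (Q U a b : ℤ)

abbrev cand (k : ℕ) : Set Pt → Prop := (levelData 𝓔 Q U a b k).1
abbrev act (k : ℕ) : Set Pt → Prop := (levelData 𝓔 Q U a b k).2.1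
abbrev noise (k : ℕ) : Set Pt := (levelData 𝓔 Q U a b k).2.2

lemma cand_zero_def (S : Set Pt) :
    cand 𝓔 Q U a b 0 S ↔ S.Nonempty ∧ S ⊆ 𝓔 ∧ FitsIn 2 2 1 S := Iff.rfl

lemma act_zero_def (S : Set Pt) :
    act 𝓔 Q U a b 0 S ↔ cand 𝓔 Q U a b 0 S ∧ Separated a a b S (𝓔 \ S) := Iff.rfl

lemma noise_zero_def : noise 𝓔 Q U a b 0 = ⋃₀ {S | act 𝓔 Q U a b 0 S} := rfl

lemma cand_succ_def (k : ℕ) (S : Set Pt) :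
    cand 𝓔 Q U a b (k + 1) S ↔
      S.Nonempty ∧ S ⊆ 𝓔 \ noise 𝓔 Q U a b k ∧
      FitsIn (Q ^ (k + 1)) (Q ^ (k + 1)) (U ^ (k + 1)) S ∧
      ∃ S₁ S₂, cand 𝓔 Q U a b k S₁ ∧ cand 𝓔 Q U a b k S₂ ∧ S₁ ⊆ S ∧ S₂ ⊆ S ∧
        Disjoint S₁ S₂ ∧ Linked (a * Q ^ k) (a * Q ^ k) (b * U ^ k) S₁ S₂ := Iff.rfl

lemma act_succ_def (k : ℕ) (S : Set Pt) :
    act 𝓔 Q U a b (k + 1) S ↔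
      cand 𝓔 Q U a b (k + 1) S ∧
      (¬ ∃ S₁ S₂, cand 𝓔 Q U a b (k + 1) S₁ ∧ cand 𝓔 Q U a b (k + 1) S₂ ∧ S₁ ⊆ S ∧ S₂ ⊆ S ∧
        Separated (4 * (a + 2) * Q ^ k) (4 * (a + 2) * Q ^ k) (4 * (b + 2) * U ^ k) S₁ S₂) ∧
      Separated (a * Q ^ (k + 1)) (a * Q ^ (k + 1)) (b * U ^ (k + 1)) S
        (𝓔 \ (S ∪ noise 𝓔 Q U a b k)) := Iff.rfl

lemma noise_succ_def (k : ℕ) :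
    noise 𝓔 Q U a b (k + 1) = noise 𝓔 Q U a b k ∪ ⋃₀ {S | act 𝓔 Q U a b (k + 1) S} := rfl

lemma noise_mono_succ (k : ℕ) : noise 𝓔 Q U a b k ⊆ noise 𝓔 Q U a b (k + 1) := by
  rw [noise_succ_def]; exact subset_union_left

lemma act_subset_noise {k : ℕ} {T : Set Pt} (hT : act 𝓔 Q U a b k T) :
    T ⊆ noise 𝓔 Q U a b k := by
  cases k with
  | zero => exact fun z hz => ⟨T, hT, hz⟩
  | succ k => exact fun z hz => Or.inr ⟨T, hT, hz⟩

/-- Upgrade lemma, base case: a point close to a good (non-noise) error point is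
not level-0 noise. -/
lemma not_noise_zero {x z : Pt} (hx : x ∈ 𝓔) (hxn : x ∉ noise 𝓔 Q U a b 0)
    (hz : Close a a b z x) : z ∉ noise 𝓔 Q U a b 0 := by
  rintro ⟨T, hT, hzT⟩
  have hsep := (act_zero_def 𝓔 Q U a b T).1 hT |>.2
  have hT' : act 𝓔 Q U a b 0 T := hT
  have hxT : x ∉ T := fun hxT => hxn (act_subset_noise 𝓔 Q U a b hT' hxT)
  exact hsep (linked_of_close hzT ⟨hx, hxT⟩ hz)

/-- Upgrade lemma, successor case. -/
lemma not_noise_succ {k : ℕ} {x z : Pt} (hx : x ∈ 𝓔)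
    (hxn : x ∉ noise 𝓔 Q U a b (k + 1)) (hz𝓔 : z ∈ 𝓔) (hzk : z ∉ noise 𝓔 Q U a b k)
    (hz : Close (a * Q ^ (k + 1)) (a * Q ^ (k + 1)) (b * U ^ (k + 1)) z x) :
    z ∉ noise 𝓔 Q U a b (k + 1) := by
  intro hzn
  rcases (by rwa [noise_succ_def] at hzn : z ∈ _ ∪ _) with h | ⟨T, hT, hzT⟩
  · exact hzk h
  · have hsep := (act_succ_def 𝓔 Q U a b k T).1 hT |>.2.2
    have hT' : act 𝓔 Q U a b (k+1) T := hT
    have hxT : x ∉ T := fun hxT => hxn (act_subset_noise 𝓔 Q U a b hT' hxT)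
    have hxk : x ∉ noise 𝓔 Q U a b k := fun h => hxn (noise_mono_succ 𝓔 Q U a b k h)
    exact hsep (linked_of_close hzT ⟨hx, fun hmem => by
      rcases hmem with h | h
      · exact hxT h
      · exact hxk h⟩ hz)

end Level

end Stmt10Aux
namespace Stmt10Aux

open Set

section Arith

variable {Q a : ℤ}

lemma one_le_pow' (hQ : 1 ≤ Q) (j : ℕ) : 1 ≤ Q ^ j := by
  have := pow_le_pow_left₀ (by norm_num : (0:ℤ) ≤ 1) hQ j
  simpa using this

-- 3ε + 1 < a Q^{j+1}
lemma k1 (ha : 2 ≤ a) (hQ : 4 * (a + 2) ≤ Q) (j : ℕ) :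
    3 * ((a + 2) * Q ^ j - 2) + 1 < a * Q ^ (j + 1) := by
  have hQj : (0:ℤ) < Q ^ j := pow_pos (by linarith) j
  rw [pow_succ]
  nlinarith [mul_pos (show (0:ℤ) < a + 2 by linarith) hQj,
    mul_le_mul_of_nonneg_right (show 8 * (a + 2) ≤ a * Q by nlinarith) hQj.le]

-- fits bound for V
lemma k2 (ha : 2 ≤ a) (hQ : 4 * (a + 2) ≤ Q) (j : ℕ) :
    2 * ((a + 2) * Q ^ j - 2) + 2 ≤ Q ^ (j + 1) := by
  have hQj : (0:ℤ) < Q ^ j := pow_pos (by linarith) j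
  rw [pow_succ]
  nlinarith [mul_pos (show (0:ℤ) < a + 2 by linarith) hQj,
    mul_le_mul_of_nonneg_right hQ hQj.le]

-- (iii)-auto bound
lemma k3 (ha : 2 ≤ a) (hQ : 4 * (a + 2) ≤ Q) (j : ℕ) :
    2 * ((a + 2) * Q ^ j - 2) + 1 < 4 * (a + 2) * Q ^ j := by
  have hQj : (0:ℤ) < Q ^ j := pow_pos (by linarith) j
  nlinarith [mul_pos (show (0:ℤ) < a + 2 by linarith) hQj]

-- disjoint-case Bdd bound
lemma k4 (ha : 2 ≤ a) (hQ : 4 * (a + 2) ≤ Q) (j : ℕ) :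
    a * Q ^ (j + 1) + 3 * ((a + 2) * Q ^ j - 2) ≤ (a + 2) * Q ^ (j + 1) - 2 := by
  have hQj : (0:ℤ) < Q ^ j := pow_pos (by linarith) j
  rw [pow_succ]
  nlinarith [mul_pos (show (0:ℤ) < a + 2 by linarith) hQj,
    mul_le_mul_of_nonneg_right hQ hQj.le]

-- top fits bound
lemma k5 (ha : 2 ≤ a) (hQ : 4 * (a + 2) ≤ Q) (j : ℕ) :
    (a + 2) * Q ^ (j + 1) - 2 + 1 ≤ Q ^ (j + 2) := by
  have hQj : (0:ℤ) < Q ^ (j + 1) := pow_pos (by linarith) (j + 1)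
  have h : (a + 2) ≤ Q := by linarith
  calc (a + 2) * Q ^ (j + 1) - 2 + 1 ≤ (a + 2) * Q ^ (j + 1) := by omega
    _ ≤ Q * Q ^ (j + 1) := mul_le_mul_of_nonneg_right h hQj.le
    _ = Q ^ (j + 2) := by rw [pow_succ]; ring

-- ε ≥ 2
lemma k6 (ha : 2 ≤ a) (hQ : 4 * (a + 2) ≤ Q) (j : ℕ) :
    2 ≤ (a + 2) * Q ^ j - 2 := by
  have h1 : (1:ℤ) ≤ Q ^ j := one_le_pow' (by linarith) j
  nlinarith

end Arith

end Stmt10Aux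
namespace Stmt10Aux

open Set

lemma disjoint_pieces {Ps : Set (Set Pt)} {V : Set Pt} (hV : V = ⋃₀ Ps) {u v : Pt}
    (hu : u ∈ V) (hv : v ∈ V) (π : Pt → ℤ) (ε0 : ℤ)
    (hπ : ∀ P ∈ Ps, ∀ x ∈ P, ∀ y ∈ P, |π x - π y| ≤ ε0)
    (hd : 2 * ε0 + 2 ≤ |π u - π v|) :
    ∃ P₁ ∈ Ps, ∃ P₂ ∈ Ps, u ∈ P₁ ∧ v ∈ P₂ ∧ Disjoint P₁ P₂ := by
  rw [hV] at hu hv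
  obtain ⟨P₁, hP₁, hu₁⟩ := hu
  obtain ⟨P₂, hP₂, hv₂⟩ := hv
  refine ⟨P₁, hP₁, P₂, hP₂, hu₁, hv₂, ?_⟩
  rw [Set.disjoint_left]
  intro w hw₁ hw₂
  have t1 := hπ P₁ hP₁ u hu₁ w hw₁
  have t2 := hπ P₂ hP₂ w hw₂ v hv₂
  have := abs_sub_le (π u) (π w) (π v)
  omega

section Grow

variable (𝓔 : Set Pt) (Q U a b : ℤ)

/-- The goal of the covering claim at level `j+1`. -/
def Concl (j : ℕ) (p : Pt) : Prop :=
  ∃ C, cand 𝓔 Q U a b (j + 2) C ∧ p ∈ C ∧ C ⊆ 𝓔 \ noise 𝓔 Q U a b (j + 1) ∧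
    Bdd ((a + 2) * Q ^ (j + 1) - 2) ((b + 2) * U ^ (j + 1) - 2) C

/-- Invariant of each piece in the growing family. -/
def PieceOK (j : ℕ) (P : Set Pt) : Prop :=
  cand 𝓔 Q U a b (j + 1) P ∧ P ⊆ 𝓔 \ noise 𝓔 Q U a b (j + 1) ∧
    Bdd ((a + 2) * Q ^ j - 2) ((b + 2) * U ^ j - 2) P

lemma grow_step (ha : 2 ≤ a) (hb : 2 ≤ b) (hQ : 4 * (a + 2) ≤ Q) (hU : 4 * (b + 2) ≤ U)
    (j : ℕ) (p : Pt) (hpn : p ∉ noise 𝓔 Q U a b (j + 1))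
    (IH : ∀ e ∈ 𝓔, e ∉ noise 𝓔 Q U a b j → ∃ T, cand 𝓔 Q U a b (j + 1) T ∧ e ∈ T ∧
      T ⊆ 𝓔 \ noise 𝓔 Q U a b j ∧ Bdd ((a + 2) * Q ^ j - 2) ((b + 2) * U ^ j - 2) T)
    (V : Set Pt) (Ps : Set (Set Pt)) (hV : V = ⋃₀ Ps) (hP : ∀ P ∈ Ps, PieceOK 𝓔 Q U a b j P)
    (hpV : p ∈ V)
    (hB : Bdd (2 * ((a + 2) * Q ^ j - 2) + 1) (2 * ((b + 2) * U ^ j - 2) + 1) V) :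
    Concl 𝓔 Q U a b j p ∨
    ∃ V' : Set Pt, ∃ Ps' : Set (Set Pt), ∃ e : Pt, V' = ⋃₀ Ps' ∧ (∀ P ∈ Ps', PieceOK 𝓔 Q U a b j P) ∧ p ∈ V' ∧
      Bdd (2 * ((a + 2) * Q ^ j - 2) + 1) (2 * ((b + 2) * U ^ j - 2) + 1) V' ∧
      e ∈ 𝓔 ∧ (|e.1 - p.1| ≤ 3 * ((a + 2) * Q ^ j - 2) + 1 ∧
        |e.2.1 - p.2.1| ≤ 3 * ((a + 2) * Q ^ j - 2) + 1 ∧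
        |e.2.2 - p.2.2| ≤ 3 * ((b + 2) * U ^ j - 2) + 1) ∧
      e ∉ V ∧ V ⊆ V' ∧ e ∈ V' := by
  classical
  set ε : ℤ := (a + 2) * Q ^ j - 2 with hε
  set ε' : ℤ := (b + 2) * U ^ j - 2 with hε'
  have hε2 : 2 ≤ ε := k6 ha hQ j
  have hε'2 : 2 ≤ ε' := k6 hb hU j
  have hk1 := k1 ha hQ j
  have hk1' := k1 hb hU j
  have hk2 := k2 ha hQ j
  have hk2' := k2 hb hU j
  have hk3 := k3 ha hQ j
  have hk3' := k3 hb hU j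
  have hk4 := k4 ha hQ j
  have hk4' := k4 hb hU j
  have hk5 : (a + 2) * Q ^ (j + 1) - 2 + 1 ≤ Q ^ (j + 1 + 1) := k5 ha hQ j
  have hk5' : (b + 2) * U ^ (j + 1) - 2 + 1 ≤ U ^ (j + 1 + 1) := k5 hb hU j
  -- basic facts about V
  have hVsub : V ⊆ 𝓔 \ noise 𝓔 Q U a b (j + 1) := by
    rw [hV]; intro z hz
    obtain ⟨P, hPm, hzP⟩ := hz
    exact (hP P hPm).2.1 hzP
  have hVsubj : V ⊆ 𝓔 \ noise 𝓔 Q U a b j := fun z hz =>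
    ⟨(hVsub hz).1, fun h => (hVsub hz).2 (noise_mono_succ 𝓔 Q U a b j h)⟩
  have hVne : V.Nonempty := ⟨p, hpV⟩
  -- V is a level-(j+1) candidate
  have hVcand : cand 𝓔 Q U a b (j + 1) V := by
    rw [cand_succ_def]
    refine ⟨hVne, hVsubj, ?_, ?_⟩
    · refine fitsIn_mono (fitsIn_of_bdd hVne hB) ?_ ?_ ?_ <;> omega
    · obtain ⟨P₀, hP₀m, hpP₀⟩ := show p ∈ ⋃₀ Ps from hV ▸ hpV
      obtain ⟨-, -, -, S₁, S₂, hc1, hc2, hs1, hs2, hd, hl⟩ :=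
        (cand_succ_def 𝓔 Q U a b j P₀).1 (hP P₀ hP₀m).1
      have hsubV : P₀ ⊆ V := by rw [hV]; exact fun z hz => ⟨P₀, hP₀m, hz⟩
      exact ⟨S₁, S₂, hc1, hc2, hs1.trans hsubV, hs2.trans hsubV, hd, hl⟩
  -- V is not an actual error (it contains the non-noise point p)
  have hVnact : ¬ act 𝓔 Q U a b (j + 1) V := fun h =>
    (hVsub hpV).2 (act_subset_noise 𝓔 Q U a b h hpV)
  -- condition (iii) holds for V automatically (V is small)
  have hViii : ¬ ∃ S₁ S₂, cand 𝓔 Q U a b (j + 1) S₁ ∧ cand 𝓔 Q U a b (j + 1) S₂ ∧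
      S₁ ⊆ V ∧ S₂ ⊆ V ∧
      Separated (4 * (a + 2) * Q ^ j) (4 * (a + 2) * Q ^ j) (4 * (b + 2) * U ^ j) S₁ S₂ := by
    rintro ⟨S₁, S₂, hc1, hc2, hs1, hs2, hsep⟩
    obtain ⟨u, hu⟩ := ((cand_succ_def 𝓔 Q U a b j S₁).1 hc1).1
    obtain ⟨v, hv⟩ := ((cand_succ_def 𝓔 Q U a b j S₂).1 hc2).1
    obtain ⟨g1, g2, g3⟩ := hB u (hs1 hu) v (hs2 hv)
    exact hsep (linked_of_close hu hv ⟨by omega, by omega, by omega⟩)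
  -- hence condition (iv) fails
  have hViv : Linked (a * Q ^ (j + 1)) (a * Q ^ (j + 1)) (b * U ^ (j + 1)) V
      (𝓔 \ (V ∪ noise 𝓔 Q U a b j)) := by
    by_contra hsep
    exact hVnact ((act_succ_def 𝓔 Q U a b j V).2 ⟨hVcand, hViii, hsep⟩)
  obtain ⟨c, hcV, e, he, hce⟩ := close_of_linked hViv
  have he𝓔 : e ∈ 𝓔 := he.1
  have heV : e ∉ V := fun h => he.2 (Or.inl h)
  have hej : e ∉ noise 𝓔 Q U a b j := fun h => he.2 (Or.inr h)
  -- e is not level-(j+1) noise either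
  have hen : e ∉ noise 𝓔 Q U a b (j + 1) :=
    not_noise_succ 𝓔 Q U a b (hVsub hcV).1 (hVsub hcV).2 he𝓔 hej (close_symm hce)
  -- get a small candidate around e
  obtain ⟨T, hTc, heT, hTsub, hTb⟩ := IH e he𝓔 hej
  have hTsub' : T ⊆ 𝓔 \ noise 𝓔 Q U a b (j + 1) := by
    intro z hz
    obtain ⟨g1, g2, g3⟩ := hTb z hz e heT
    exact ⟨(hTsub hz).1, not_noise_succ 𝓔 Q U a b he𝓔 hen (hTsub hz).1 (hTsub hz).2
      ⟨by omega, by omega, by omega⟩⟩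
  by_cases hdis : Disjoint V T
  · -- done: (V, T) is a linked disjoint pair of level-(j+1) candidates
    left
    refine ⟨V ∪ T, ?_, Or.inl hpV, union_subset hVsub hTsub', ?_⟩
    · rw [cand_succ_def]
      have hBC : Bdd ((a + 2) * Q ^ (j + 1) - 2) ((b + 2) * U ^ (j + 1) - 2) (V ∪ T) := by
        intro u hu v hv
        have tri : ∀ x y : ℤ, ∀ w z : ℤ, |x - y| ≤ |x - w| + |w - z| + |z - y| := by
          intro x y w z
          have h1 := abs_sub_le x w y
          have h2 := abs_sub_le w z y
          omega
        rcases hu with hu | hu <;> rcases hv with hv | hv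
        · obtain ⟨g1, g2, g3⟩ := hB u hu v hv
          refine ⟨by omega, by omega, by omega⟩
        · obtain ⟨g1, g2, g3⟩ := hB u hu c hcV
          obtain ⟨d1, d2, d3⟩ := hce
          obtain ⟨f1, f2, f3⟩ := hTb e heT v hv
          refine ⟨?_, ?_, ?_⟩
          · have := tri u.1 v.1 c.1 e.1; omega
          · have := tri u.2.1 v.2.1 c.2.1 e.2.1; omega
          · have := tri u.2.2 v.2.2 c.2.2 e.2.2; omega
        · obtain ⟨g1, g2, g3⟩ := hB v hv c hcV
          obtain ⟨d1, d2, d3⟩ := hce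
          obtain ⟨f1, f2, f3⟩ := hTb e heT u hu
          refine ⟨?_, ?_, ?_⟩
          · have := tri v.1 u.1 c.1 e.1; rw [abs_sub_comm]; omega
          · have := tri v.2.1 u.2.1 c.2.1 e.2.1; rw [abs_sub_comm]; omega
          · have := tri v.2.2 u.2.2 c.2.2 e.2.2; rw [abs_sub_comm]; omega
        · obtain ⟨g1, g2, g3⟩ := hTb u hu v hv
          refine ⟨by omega, by omega, by omega⟩
      refine ⟨⟨p, Or.inl hpV⟩, union_subset hVsub hTsub', ?_, V, T, hVcand, hTc,
        subset_union_left, subset_union_right, hdis, linked_of_close hcV heT hce⟩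
      refine fitsIn_mono (fitsIn_of_bdd ⟨p, Or.inl hpV⟩ hBC) ?_ ?_ ?_ <;> omega
    · intro u hu v hv
      have tri : ∀ x y : ℤ, ∀ w z : ℤ, |x - y| ≤ |x - w| + |w - z| + |z - y| := by
        intro x y w z
        have h1 := abs_sub_le x w y
        have h2 := abs_sub_le w z y
        omega
      rcases hu with hu | hu <;> rcases hv with hv | hv
      · obtain ⟨g1, g2, g3⟩ := hB u hu v hv
        refine ⟨by omega, by omega, by omega⟩
      · obtain ⟨g1, g2, g3⟩ := hB u hu c hcV
        obtain ⟨d1, d2, d3⟩ := hce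
        obtain ⟨f1, f2, f3⟩ := hTb e heT v hv
        refine ⟨?_, ?_, ?_⟩
        · have := tri u.1 v.1 c.1 e.1; omega
        · have := tri u.2.1 v.2.1 c.2.1 e.2.1; omega
        · have := tri u.2.2 v.2.2 c.2.2 e.2.2; omega
      · obtain ⟨g1, g2, g3⟩ := hB v hv c hcV
        obtain ⟨d1, d2, d3⟩ := hce
        obtain ⟨f1, f2, f3⟩ := hTb e heT u hu
        refine ⟨?_, ?_, ?_⟩
        · have := tri v.1 u.1 c.1 e.1; rw [abs_sub_comm]; omega
        · have := tri v.2.1 u.2.1 c.2.1 e.2.1; rw [abs_sub_comm]; omega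
        · have := tri v.2.2 u.2.2 c.2.2 e.2.2; rw [abs_sub_comm]; omega
      · obtain ⟨g1, g2, g3⟩ := hTb u hu v hv
        refine ⟨by omega, by omega, by omega⟩
  · -- overlap case
    obtain ⟨z₀, hz₀V, hz₀T⟩ := Set.not_disjoint_iff.1 hdis
    have hPOK : ∀ P ∈ insert T Ps, PieceOK 𝓔 Q U a b j P := by
      rintro P (rfl | hPm)
      · exact ⟨hTc, hTsub', hTb⟩
      · exact hP P hPm
    have hV' : V ∪ T = ⋃₀ insert T Ps := by rw [sUnion_insert, hV, union_comm]
    -- global bound on V ∪ T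
    have hB3 : Bdd (3 * ε + 1) (3 * ε' + 1) (V ∪ T) := by
      intro u hu v hv
      rcases hu with hu | hu <;> rcases hv with hv | hv
      · obtain ⟨g1, g2, g3⟩ := hB u hu v hv
        refine ⟨by omega, by omega, by omega⟩
      · obtain ⟨g1, g2, g3⟩ := hB u hu z₀ hz₀V
        obtain ⟨f1, f2, f3⟩ := hTb z₀ hz₀T v hv
        have t1 := abs_sub_le u.1 z₀.1 v.1
        have t2 := abs_sub_le u.2.1 z₀.2.1 v.2.1
        have t3 := abs_sub_le u.2.2 z₀.2.2 v.2.2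
        refine ⟨by omega, by omega, by omega⟩
      · obtain ⟨g1, g2, g3⟩ := hB v hv z₀ hz₀V
        obtain ⟨f1, f2, f3⟩ := hTb z₀ hz₀T u hu
        have t1 := abs_sub_le v.1 z₀.1 u.1
        have t2 := abs_sub_le v.2.1 z₀.2.1 u.2.1
        have t3 := abs_sub_le v.2.2 z₀.2.2 u.2.2
        refine ⟨by rw [abs_sub_comm]; omega, by rw [abs_sub_comm]; omega,
          by rw [abs_sub_comm]; omega⟩
      · obtain ⟨g1, g2, g3⟩ := hTb u hu v hv
        refine ⟨by omega, by omega, by omega⟩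
    -- extraction helper: two disjoint pieces give the conclusion
    have extract : ∀ P₁ ∈ insert T Ps, ∀ P₂ ∈ insert T Ps, Disjoint P₁ P₂ →
        Concl 𝓔 Q U a b j p := by
      intro P₁ hP₁ P₂ hP₂ hd12
      obtain ⟨u₁, hu₁⟩ := ((cand_succ_def 𝓔 Q U a b j P₁).1 (hPOK P₁ hP₁).1).1
      obtain ⟨v₂, hv₂⟩ := ((cand_succ_def 𝓔 Q U a b j P₂).1 (hPOK P₂ hP₂).1).1
      have hu₁V : u₁ ∈ V ∪ T := by
        rw [hV']; exact ⟨P₁, hP₁, hu₁⟩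
      have hv₂V : v₂ ∈ V ∪ T := by
        rw [hV']; exact ⟨P₂, hP₂, hv₂⟩
      obtain ⟨g1, g2, g3⟩ := hB3 u₁ hu₁V v₂ hv₂V
      have hsubVT : ∀ P ∈ insert T Ps, P ⊆ V ∪ T := by
        intro P hPm z hz; rw [hV']; exact ⟨P, hPm, hz⟩
      refine ⟨V ∪ T, ?_, Or.inl hpV, union_subset hVsub hTsub',
        bdd_mono hB3 (fun z hz => hz) (by omega) (by omega)⟩
      rw [cand_succ_def]
      refine ⟨⟨p, Or.inl hpV⟩, union_subset hVsub hTsub', ?_,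
        P₁, P₂, (hPOK P₁ hP₁).1, (hPOK P₂ hP₂).1, hsubVT P₁ hP₁, hsubVT P₂ hP₂, hd12,
        linked_of_close hu₁ hv₂ ⟨by omega, by omega, by omega⟩⟩
      refine fitsIn_mono (fitsIn_of_bdd ⟨p, Or.inl hpV⟩ hB3) ?_ ?_ ?_ <;> omega
    by_cases hx : ∀ u ∈ V ∪ T, ∀ v ∈ V ∪ T, |u.1 - v.1| ≤ 2 * ε + 1
    · by_cases hy : ∀ u ∈ V ∪ T, ∀ v ∈ V ∪ T, |u.2.1 - v.2.1| ≤ 2 * ε + 1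
      · by_cases ht : ∀ u ∈ V ∪ T, ∀ v ∈ V ∪ T, |u.2.2 - v.2.2| ≤ 2 * ε' + 1
        · -- progress case
          right
          refine ⟨V ∪ T, insert T Ps, e, hV', hPOK, Or.inl hpV,
            fun u hu v hv => ⟨hx u hu v hv, hy u hu v hv, ht u hu v hv⟩, he𝓔, ?_, heV,
            subset_union_left, Or.inr heT⟩
          obtain ⟨f1, f2, f3⟩ := hTb e heT z₀ hz₀T
          obtain ⟨g1, g2, g3⟩ := hB z₀ hz₀V p hpV
          have t1 := abs_sub_le e.1 z₀.1 p.1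
          have t2 := abs_sub_le e.2.1 z₀.2.1 p.2.1
          have t3 := abs_sub_le e.2.2 z₀.2.2 p.2.2
          exact ⟨by omega, by omega, by omega⟩
        · left
          push_neg at ht
          obtain ⟨u, hu, v, hv, hgt⟩ := ht
          obtain ⟨P₁, hP₁, P₂, hP₂, -, -, hd12⟩ := disjoint_pieces hV' hu hv
            (fun q => q.2.2) ε' (fun P hPm x hx' y hy' => ((hPOK P hPm).2.2 x hx' y hy').2.2)
            (by show 2 * ε' + 2 ≤ |u.2.2 - v.2.2|; omega)
          exact extract P₁ hP₁ P₂ hP₂ hd12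
      · left
        push_neg at hy
        obtain ⟨u, hu, v, hv, hgt⟩ := hy
        obtain ⟨P₁, hP₁, P₂, hP₂, -, -, hd12⟩ := disjoint_pieces hV' hu hv
          (fun q => q.2.1) ε (fun P hPm x hx' y hy' => ((hPOK P hPm).2.2 x hx' y hy').2.1)
          (by show 2 * ε + 2 ≤ |u.2.1 - v.2.1|; omega)
        exact extract P₁ hP₁ P₂ hP₂ hd12
    · left
      push_neg at hx
      obtain ⟨u, hu, v, hv, hgt⟩ := hx
      obtain ⟨P₁, hP₁, P₂, hP₂, -, -, hd12⟩ := disjoint_pieces hV' hu hv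
        (fun q => q.1) ε (fun P hPm x hx' y hy' => ((hPOK P hPm).2.2 x hx' y hy').1)
        (by show 2 * ε + 2 ≤ |u.1 - v.1|; omega)
      exact extract P₁ hP₁ P₂ hP₂ hd12

end Grow

end Stmt10Aux
namespace Stmt10Aux

open Set

section GrowRec

variable (𝓔 : Set Pt) (Q U a b : ℤ)

/-- The finite frame within which the growth process takes place. -/
def Frame (j : ℕ) (p : Pt) : Set Pt :=
  {q | q ∈ 𝓔 ∧ |q.1 - p.1| ≤ 3 * ((a + 2) * Q ^ j - 2) + 1 ∧
    |q.2.1 - p.2.1| ≤ 3 * ((a + 2) * Q ^ j - 2) + 1 ∧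
    |q.2.2 - p.2.2| ≤ 3 * ((b + 2) * U ^ j - 2) + 1}

lemma frame_finite (j : ℕ) (p : Pt) : (Frame 𝓔 Q U a b j p).Finite := by
  set R : ℤ := 3 * ((a + 2) * Q ^ j - 2) + 1
  set R' : ℤ := 3 * ((b + 2) * U ^ j - 2) + 1
  refine Set.Finite.subset (Set.Finite.prod (Set.finite_Icc (p.1 - R) (p.1 + R))
    (Set.Finite.prod (Set.finite_Icc (p.2.1 - R) (p.2.1 + R))
      (Set.finite_Icc (p.2.2 - R') (p.2.2 + R')))) ?_
  rintro q ⟨-, h1, h2, h3⟩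
  rw [abs_le] at h1 h2 h3
  exact ⟨⟨by omega, by omega⟩, ⟨by omega, by omega⟩, by omega, by omega⟩

lemma grow (ha : 2 ≤ a) (hb : 2 ≤ b) (hQ : 4 * (a + 2) ≤ Q) (hU : 4 * (b + 2) ≤ U)
    (j : ℕ) (p : Pt) (hpn : p ∉ noise 𝓔 Q U a b (j + 1))
    (IH : ∀ e ∈ 𝓔, e ∉ noise 𝓔 Q U a b j → ∃ T, cand 𝓔 Q U a b (j + 1) T ∧ e ∈ T ∧
      T ⊆ 𝓔 \ noise 𝓔 Q U a b j ∧ Bdd ((a + 2) * Q ^ j - 2) ((b + 2) * U ^ j - 2) T) :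
    ∀ N : ℕ, ∀ V : Set Pt, ∀ Ps : Set (Set Pt), V = ⋃₀ Ps →
      (∀ P ∈ Ps, PieceOK 𝓔 Q U a b j P) → p ∈ V →
      Bdd (2 * ((a + 2) * Q ^ j - 2) + 1) (2 * ((b + 2) * U ^ j - 2) + 1) V →
      ∀ hfin : (Frame 𝓔 Q U a b j p \ V).Finite, hfin.toFinset.card ≤ N →
      Concl 𝓔 Q U a b j p := by
  intro N
  induction N with
  | zero =>
    intro V Ps h1 h2 h3 h4 hfin hcard
    rcases grow_step 𝓔 Q U a b ha hb hQ hU j p hpn IH V Ps h1 h2 h3 h4 with hC |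
      ⟨V', Ps', e, hV', hP', hpV', hB', he𝓔, hedist, heV, hVV', heV'⟩
    · exact hC
    · exfalso
      have heF : e ∈ Frame 𝓔 Q U a b j p \ V :=
        ⟨⟨he𝓔, hedist.1, hedist.2.1, hedist.2.2⟩, heV⟩
      have hmem : e ∈ hfin.toFinset := hfin.mem_toFinset.2 heF
      have := Finset.card_pos.2 ⟨e, hmem⟩
      omega
  | succ N ihN =>
    intro V Ps h1 h2 h3 h4 hfin hcard
    rcases grow_step 𝓔 Q U a b ha hb hQ hU j p hpn IH V Ps h1 h2 h3 h4 with hC |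
      ⟨V', Ps', e, hV', hP', hpV', hB', he𝓔, hedist, heV, hVV', heV'⟩
    · exact hC
    · have hfin' : (Frame 𝓔 Q U a b j p \ V').Finite :=
        hfin.subset (fun z hz => ⟨hz.1, fun hzy => hz.2 (hVV' hzy)⟩)
      refine ihN V' Ps' hV' hP' hpV' hB' hfin' ?_
      have heF : e ∈ Frame 𝓔 Q U a b j p \ V :=
        ⟨⟨he𝓔, hedist.1, hedist.2.1, hedist.2.2⟩, heV⟩
      have hsub : hfin'.toFinset ⊆ hfin.toFinset.erase e := by
        intro z hz
        rw [Set.Finite.mem_toFinset] at hz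
        refine Finset.mem_erase.2 ⟨?_, hfin.mem_toFinset.2 ⟨hz.1, fun h => hz.2 (hVV' h)⟩⟩
        rintro rfl
        exact hz.2 heV'
      have hc1 := Finset.card_le_card hsub
      have hc2 : (hfin.toFinset.erase e).card = hfin.toFinset.card - 1 :=
        Finset.card_erase_of_mem (hfin.mem_toFinset.2 heF)
      have hc3 := Finset.card_pos.2 ⟨e, hfin.mem_toFinset.2 heF⟩
      omega

end GrowRec

section Claim

variable (𝓔 : Set Pt) (Q U a b : ℤ)

/-- The covering claim: every error point which is not level-`k` noise lies in a small
level-`(k+1)` candidate consisting of non-noise points. -/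
lemma claim (ha : 2 ≤ a) (hb : 2 ≤ b) (hQ : 4 * (a + 2) ≤ Q) (hU : 4 * (b + 2) ≤ U) :
    ∀ k : ℕ, ∀ p : Pt, p ∈ 𝓔 → p ∉ noise 𝓔 Q U a b k →
      ∃ C, cand 𝓔 Q U a b (k + 1) C ∧ p ∈ C ∧ C ⊆ 𝓔 \ noise 𝓔 Q U a b k ∧
        Bdd ((a + 2) * Q ^ k - 2) ((b + 2) * U ^ k - 2) C := by
  intro k
  induction k with
  | zero =>
    intro p hp𝓔 hpn
    have hfit1 : ∀ z : Pt, FitsIn 2 2 1 {z} := by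
      intro z
      refine ⟨z.1, z.2.1, z.2.2, fun q hq => ?_⟩
      rw [Set.mem_singleton_iff] at hq
      subst hq
      exact ⟨le_refl _, by omega, le_refl _, by omega, le_refl _, by omega⟩
    have hcand0 : cand 𝓔 Q U a b 0 {p} :=
      ⟨⟨p, rfl⟩, Set.singleton_subset_iff.2 hp𝓔, hfit1 p⟩
    have hnact : ¬ act 𝓔 Q U a b 0 {p} := fun h =>
      hpn (act_subset_noise 𝓔 Q U a b h rfl)
    have hlink : Linked a a b {p} (𝓔 \ {p}) := by
      by_contra hsep
      exact hnact ((act_zero_def 𝓔 Q U a b {p}).2 ⟨hcand0, hsep⟩)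
    obtain ⟨u, hu, q, hq, hcl⟩ := close_of_linked hlink
    rw [Set.mem_singleton_iff] at hu
    rw [hu] at hcl
    have hq𝓔 : q ∈ 𝓔 := hq.1
    have hqp : q ≠ p := fun h => hq.2 (by rw [h]; rfl)
    have hqn : q ∉ noise 𝓔 Q U a b 0 :=
      not_noise_zero 𝓔 Q U a b hp𝓔 hpn (close_symm hcl)
    have hcandq : cand 𝓔 Q U a b 0 {q} :=
      ⟨⟨q, rfl⟩, Set.singleton_subset_iff.2 hq𝓔, hfit1 q⟩
    obtain ⟨c1, c2, c3⟩ := hcl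
    rw [abs_lt] at c1 c2 c3
    have hBpq : Bdd ((a + 2) * Q ^ 0 - 2) ((b + 2) * U ^ 0 - 2) {p, q} := by
      have hself : ∀ z : Pt, |z.1 - z.1| ≤ (a + 2) * Q ^ 0 - 2 ∧
          |z.2.1 - z.2.1| ≤ (a + 2) * Q ^ 0 - 2 ∧ |z.2.2 - z.2.2| ≤ (b + 2) * U ^ 0 - 2 := by
        intro z
        simp only [pow_zero, mul_one, sub_self, abs_zero]
        omega
      have hpq' : |p.1 - q.1| ≤ (a + 2) * Q ^ 0 - 2 ∧
          |p.2.1 - q.2.1| ≤ (a + 2) * Q ^ 0 - 2 ∧ |p.2.2 - q.2.2| ≤ (b + 2) * U ^ 0 - 2 := by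
        simp only [pow_zero, mul_one]
        exact ⟨by rw [abs_le]; omega, by rw [abs_le]; omega, by rw [abs_le]; omega⟩
      have hqp' : |q.1 - p.1| ≤ (a + 2) * Q ^ 0 - 2 ∧
          |q.2.1 - p.2.1| ≤ (a + 2) * Q ^ 0 - 2 ∧ |q.2.2 - p.2.2| ≤ (b + 2) * U ^ 0 - 2 := by
        simp only [pow_zero, mul_one]
        exact ⟨by rw [abs_le]; omega, by rw [abs_le]; omega, by rw [abs_le]; omega⟩
      intro x hx y hy
      rcases hx with hx | hx <;> rcases hy with hy | hy
      · rw [hx, hy]; exact hself p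
      · rw [Set.mem_singleton_iff] at hy; rw [hx, hy]; exact hpq'
      · rw [Set.mem_singleton_iff] at hx; rw [hx, hy]; exact hqp'
      · rw [Set.mem_singleton_iff] at hx hy; rw [hx, hy]; exact hself q
    have hsubE : {p, q} ⊆ 𝓔 \ noise 𝓔 Q U a b 0 := by
      rintro z (rfl | hz)
      · exact ⟨hp𝓔, hpn⟩
      · rw [Set.mem_singleton_iff] at hz; subst hz; exact ⟨hq𝓔, hqn⟩
    refine ⟨{p, q}, ?_, Set.mem_insert _ _, hsubE, hBpq⟩
    rw [cand_succ_def]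
    refine ⟨⟨p, Set.mem_insert _ _⟩, hsubE, ?_, {p}, {q}, hcand0, hcandq,
      Set.singleton_subset_iff.2 (Set.mem_insert _ _),
      Set.singleton_subset_iff.2 (Set.mem_insert_of_mem _ rfl),
      Set.disjoint_singleton_left.2 (fun h => hqp ((Set.mem_singleton_iff.1 h).symm)), ?_⟩
    · have hQQ : Q ^ (0 + 1) = Q := by norm_num
      have hUU : U ^ (0 + 1) = U := by norm_num
      refine fitsIn_mono (fitsIn_of_bdd ⟨p, Set.mem_insert _ _⟩ hBpq) ?_ ?_ ?_ <;>
        simp only [pow_zero, mul_one, hQQ, hUU] <;> omega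
    · have hQ0 : a * Q ^ 0 = a := by norm_num
      have hU0 : b * U ^ 0 = b := by norm_num
      rw [hQ0, hU0]
      exact linked_of_close rfl rfl ⟨by rw [abs_lt]; omega, by rw [abs_lt]; omega,
        by rw [abs_lt]; omega⟩
  | succ j IHj =>
    intro p hp𝓔 hpn
    have hk1 := k1 ha hQ j
    have hk1' := k1 hb hU j
    have hε2 : 2 ≤ (a + 2) * Q ^ j - 2 := k6 ha hQ j
    have hε'2 : 2 ≤ (b + 2) * U ^ j - 2 := k6 hb hU j
    have hpj : p ∉ noise 𝓔 Q U a b j := fun h => hpn (noise_mono_succ 𝓔 Q U a b j h)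
    obtain ⟨T₀, hT₀c, hpT₀, hT₀sub, hT₀b⟩ := IHj p hp𝓔 hpj
    have hT₀sub' : T₀ ⊆ 𝓔 \ noise 𝓔 Q U a b (j + 1) := by
      intro z hz
      obtain ⟨g1, g2, g3⟩ := hT₀b z hz p hpT₀
      exact ⟨(hT₀sub hz).1, not_noise_succ 𝓔 Q U a b hp𝓔 hpn (hT₀sub hz).1 (hT₀sub hz).2
        ⟨by omega, by omega, by omega⟩⟩
    have hfin : (Frame 𝓔 Q U a b j p \ T₀).Finite :=
      (frame_finite 𝓔 Q U a b j p).subset diff_subset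
    have hconcl : Concl 𝓔 Q U a b j p := by
      refine grow 𝓔 Q U a b ha hb hQ hU j p hpn IHj hfin.toFinset.card T₀ {T₀}
        (by rw [sUnion_singleton]) ?_ hpT₀ ?_ hfin le_rfl
      · rintro P rfl
        exact ⟨hT₀c, hT₀sub', hT₀b⟩
      · exact bdd_mono hT₀b (fun z hz => hz) (by omega) (by omega)
    exact hconcl

end Claim

end Stmt10Aux

open Stmt10Aux in
/-- Every actual level-`(n+1)` error fits inside a space-time box of size
`min{Q, 7(a+2)}·Qⁿ × min{Q, 7(a+2)}·Qⁿ × min{U, 7(b+2)}·Uⁿ`. -/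
theorem stmt_10 (𝓔 : Set (ℤ × ℤ × ℤ)) (Q U a b : ℤ)
    (ha : 2 ≤ a) (hb : 2 ≤ b) (hQ : 4 * (a + 2) ≤ Q) (hU : 4 * (b + 2) ≤ U)
    (n : ℕ) (S : Set (ℤ × ℤ × ℤ))
    (hS : (levelData 𝓔 Q U a b (n + 1)).2.1 S) :
    FitsIn (min Q (7 * (a + 2)) * Q ^ n) (min Q (7 * (a + 2)) * Q ^ n)
      (min U (7 * (b + 2)) * U ^ n) S := by
  classical
  have hact : act 𝓔 Q U a b (n + 1) S := hS
  obtain ⟨hcand, hiii, hiv⟩ := (act_succ_def 𝓔 Q U a b n S).1 hact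
  obtain ⟨hne, hsub, hfit, -⟩ := (cand_succ_def 𝓔 Q U a b n S).1 hcand
  have hk1 := k1 ha hQ n
  have hk1' := k1 hb hU n
  have hε2 := k6 ha hQ n
  have hε'2 := k6 hb hU n
  -- every point of S lies in a small level-(n+1) candidate contained in S
  have cover : ∀ p ∈ S, ∃ C, p ∈ C ∧ C ⊆ S ∧
      Bdd ((a + 2) * Q ^ n - 2) ((b + 2) * U ^ n - 2) C ∧ cand 𝓔 Q U a b (n + 1) C := by
    intro p hp
    obtain ⟨C, hCc, hpC, hCsub, hCb⟩ :=
      claim 𝓔 Q U a b ha hb hQ hU n p (hsub hp).1 (hsub hp).2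
    refine ⟨C, hpC, ?_, hCb, hCc⟩
    intro z hz
    by_contra hzS
    obtain ⟨g1, g2, g3⟩ := hCb p hpC z hz
    refine hiv (linked_of_close hp ⟨(hCsub hz).1, fun hmem => ?_⟩
      ⟨by omega, by omega, by omega⟩)
    rcases hmem with h | h
    · exact hzS h
    · exact (hCsub hz).2 h
  -- the pairwise bound coming from condition (iii) and the covering
  have pair1 : ∀ p ∈ S, ∀ q ∈ S, |p.1 - q.1| ≤ 6 * (a + 2) * Q ^ n - 5 ∧
      |p.2.1 - q.2.1| ≤ 6 * (a + 2) * Q ^ n - 5 ∧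
      |p.2.2 - q.2.2| ≤ 6 * (b + 2) * U ^ n - 5 := by
    intro p hp q hq
    obtain ⟨Cp, hpCp, hCpS, hCpb, hCpc⟩ := cover p hp
    obtain ⟨Cq, hqCq, hCqS, hCqb, hCqc⟩ := cover q hq
    have hlink : Linked (4 * (a + 2) * Q ^ n) (4 * (a + 2) * Q ^ n) (4 * (b + 2) * U ^ n)
        Cp Cq := by
      by_contra hsep
      exact hiii ⟨Cp, Cq, hCpc, hCqc, hCpS, hCqS, hsep⟩
    obtain ⟨u, hu, v, hv, d1, d2, d3⟩ := close_of_linked hlink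
    obtain ⟨e1, e2, e3⟩ := hCpb p hpCp u hu
    obtain ⟨f1, f2, f3⟩ := hCqb v hv q hqCq
    rw [abs_lt] at d1 d2 d3
    rw [abs_le] at e1 e2 e3 f1 f2 f3
    refine ⟨?_, ?_, ?_⟩ <;> rw [abs_le] <;> constructor <;> linarith
  -- the pairwise bound coming from condition (ii)
  obtain ⟨x, y, t, hbox⟩ := hfit
  have pair2 : ∀ p ∈ S, ∀ q ∈ S, |p.1 - q.1| ≤ Q ^ (n + 1) - 1 ∧
      |p.2.1 - q.2.1| ≤ Q ^ (n + 1) - 1 ∧ |p.2.2 - q.2.2| ≤ U ^ (n + 1) - 1 := by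
    intro p hp q hq
    obtain ⟨a1, a2, a3, a4, a5, a6⟩ := hbox hp
    obtain ⟨b1, b2, b3, b4, b5, b6⟩ := hbox hq
    refine ⟨?_, ?_, ?_⟩ <;> rw [abs_le] <;> omega
  have hQn : (0:ℤ) < Q ^ n := pow_pos (by linarith) n
  have hUn : (0:ℤ) < U ^ n := pow_pos (by linarith) n
  have hQmul : Q * Q ^ n = Q ^ (n + 1) := by rw [pow_succ]; ring
  have hUmul : U * U ^ n = U ^ (n + 1) := by rw [pow_succ]; ring
  have hminQ : ∀ w : ℤ, w ≤ Q ^ (n + 1) - 1 → w ≤ 7 * (a + 2) * Q ^ n - 1 →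
      w ≤ min Q (7 * (a + 2)) * Q ^ n - 1 := by
    intro w h1 h2
    rcases le_total Q (7 * (a + 2)) with h | h
    · rw [min_eq_left h, hQmul]; exact h1
    · rw [min_eq_right h]; exact h2
  have hminU : ∀ w : ℤ, w ≤ U ^ (n + 1) - 1 → w ≤ 7 * (b + 2) * U ^ n - 1 →
      w ≤ min U (7 * (b + 2)) * U ^ n - 1 := by
    intro w h1 h2
    rcases le_total U (7 * (b + 2)) with h | h
    · rw [min_eq_left h, hUmul]; exact h1
    · rw [min_eq_right h]; exact h2
  have hc1 : 6 * (a + 2) * Q ^ n - 5 ≤ 7 * (a + 2) * Q ^ n - 1 := by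
    have hX : (0:ℤ) < (a + 2) * Q ^ n := mul_pos (by linarith) hQn
    linarith
  have hc1' : 6 * (b + 2) * U ^ n - 5 ≤ 7 * (b + 2) * U ^ n - 1 := by
    have hX : (0:ℤ) < (b + 2) * U ^ n := mul_pos (by linarith) hUn
    linarith
  have hBddS : Bdd (min Q (7 * (a + 2)) * Q ^ n - 1) (min U (7 * (b + 2)) * U ^ n - 1) S := by
    intro p hp q hq
    obtain ⟨a1, a2, a3⟩ := pair1 p hp q hq
    obtain ⟨b1, b2, b3⟩ := pair2 p hp q hq
    exact ⟨hminQ _ b1 (le_trans a1 hc1), hminQ _ b2 (le_trans a2 hc1),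
      hminU _ b3 (le_trans a3 hc1')⟩
  exact fitsIn_mono (fitsIn_of_bdd hne hBddS) (by omega) (by omega) (by omega)
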